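/- Let f be a probability density on ℝ with 0 ≤ f ≤ M and ∫_ℝ |x|^{1+ε} f(x) dx = m < ∞ for some ε > 0. Then the COS tail energy satisfies B(L) ≤ 4 ζ(1+ε) M m L^{-(1+ε)} for all L > 0; in particular f is COS-admissible. -/

import Mathlib

/-!
Cut the tail `{L < |x|}` into the blocks `((2n-1)L, (2n+1)L]`, `n ∈ ℤ`. On each block the
cosine modes are orthogonal with norms at most `√(2L)`, so Bessel's inequality bounds the block
energy `∑ₖ bₙₖ²` by `2L ∫ f² ≤ 2LM ∫ f`, and since `|x| ≥ |n| L` on the tail part of block `n`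
this is at most `2LM (|n| L)^{-(1+ε)} ∫ |x|^{1+ε} f`. The coefficient of mode `k` is `∑ₙ bₙₖ`;
Cauchy–Schwarz with weights `|n|^{-(1+ε)}` (summing to `2 ζ(1+ε)`) adds up the blocks.
-/

open MeasureTheory Real Filter Set
open scoped InnerProductSpace

theorem sum_inner_sq_le_of_orthogonal {ι E : Type*} [NormedAddCommGroup E]
    [InnerProductSpace ℝ E] {v : ι → E} (hv : Pairwise fun i j => ⟪v i, v j⟫_ℝ = 0) {C : ℝ}
    (hC : ∀ i, ‖v i‖ ≤ C) (x : E) (s : Finset ι) :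
    ∑ i ∈ s, ⟪v i, x⟫_ℝ ^ 2 ≤ C ^ 2 * ‖x‖ ^ 2 := by
  set S := ∑ i ∈ s, ⟪v i, x⟫_ℝ ^ 2
  set u := ∑ i ∈ s, ⟪v i, x⟫_ℝ • v i
  have hS : 0 ≤ S := Finset.sum_nonneg fun i _ => sq_nonneg _
  have hux : ⟪u, x⟫_ℝ = S := by
    simp only [u, S, sum_inner, real_inner_smul_left, sq]
  have huu : ‖u‖ ^ 2 ≤ C ^ 2 * S := by
    have : ‖u‖ ^ 2 = ∑ i ∈ s, ⟪v i, x⟫_ℝ ^ 2 * ‖v i‖ ^ 2 := by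
      rw [← real_inner_self_eq_norm_sq]
      simp only [u, sum_inner, inner_sum, real_inner_smul_left, real_inner_smul_right]
      refine Finset.sum_congr rfl fun i hi => ?_
      rw [Finset.sum_eq_single i (fun j _ hji => by rw [hv hji]; ring) (by simp [hi]),
        real_inner_self_eq_norm_sq]
      ring
    rw [this, Finset.mul_sum]
    refine Finset.sum_le_sum fun i _ => ?_
    rw [mul_comm]
    exact mul_le_mul_of_nonneg_right (pow_le_pow_left₀ (norm_nonneg _) (hC i) 2) (sq_nonneg _)
  have hSS : S ^ 2 ≤ C ^ 2 * S * ‖x‖ ^ 2 := by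
    calc S ^ 2 = ⟪u, x⟫_ℝ ^ 2 := by rw [hux]
      _ ≤ (‖u‖ * ‖x‖) ^ 2 := by
        rw [← sq_abs]; gcongr; exact abs_real_inner_le_norm u x
      _ = ‖u‖ ^ 2 * ‖x‖ ^ 2 := mul_pow _ _ _
      _ ≤ C ^ 2 * S * ‖x‖ ^ 2 := by gcongr
  rcases hS.eq_or_lt with h0 | hpos
  · rw [← h0]; positivity
  · nlinarith

section L2

variable {α : Type*} [MeasurableSpace α] {μ : Measure α}

theorem inner_toLp_eq_integral_mul {f g : α → ℝ} (hf : MemLp f 2 μ) (hg : MemLp g 2 μ) :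
    ⟪hf.toLp f, hg.toLp g⟫_ℝ = ∫ x, f x * g x ∂μ := by
  rw [L2.inner_def]
  refine integral_congr_ae ?_
  filter_upwards [hf.coeFn_toLp, hg.coeFn_toLp] with x hfx hgx
  rw [hfx, hgx, Real.inner_apply]

theorem sum_sq_integral_mul_le_of_orthogonal [IsFiniteMeasure μ] {ι : Type*} {φ : ι → α → ℝ}
    (hφm : ∀ i, AEStronglyMeasurable (φ i) μ) {C : ℝ} (hC : 0 ≤ C) (hφC : ∀ i x, |φ i x| ≤ C)
    (horth : Pairwise fun i j => ∫ x, φ i x * φ j x ∂μ = 0) {g : α → ℝ} (hg : MemLp g 2 μ)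
    (s : Finset ι) :
    ∑ i ∈ s, (∫ x, g x * φ i x ∂μ) ^ 2 ≤ C ^ 2 * μ.real univ * ∫ x, g x ^ 2 ∂μ := by
  have hφ : ∀ i, MemLp (φ i) 2 μ := fun i => .of_bound (hφm i) C (ae_of_all _ (hφC i))
  have hnorm : ∀ i, ‖(hφ i).toLp (φ i)‖ ≤ √(μ.real univ) * C := by
    intro i
    refine (Lp.norm_le_of_ae_bound hC ?_).trans_eq ?_
    · filter_upwards [(hφ i).coeFn_toLp] with x hx
      rw [hx]; exact hφC i x
    · simp [Real.sqrt_eq_rpow, measureUnivNNReal, measureReal_def, ENNReal.coe_toNNReal_eq_toReal]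
  have h := sum_inner_sq_le_of_orthogonal (v := fun i => (hφ i).toLp (φ i))
    (fun i j hij => (inner_toLp_eq_integral_mul _ _).trans (horth hij)) hnorm (hg.toLp g) s
  simp only [inner_toLp_eq_integral_mul, ← real_inner_self_eq_norm_sq] at h
  convert h using 2
  · simp_rw [mul_comm]
  · rw [mul_pow, Real.sq_sqrt measureReal_nonneg]; ring
  · simp_rw [sq]

end L2

noncomputable def cosMode (L : ℝ) (k : ℕ) (x : ℝ) : ℝ := cos (k * π * (x + L) / (2 * L))

def cosBlock (L : ℝ) (n : ℤ) : Set ℝ := Ioc ((2 * n - 1) * L) ((2 * n + 1) * L)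

variable {L : ℝ}

theorem continuous_cosMode (L : ℝ) (k : ℕ) : Continuous (cosMode L k) := by
  unfold cosMode; fun_prop

-- On `cosBlock L n` the phase `π (x + L) / (2 * L)` runs over `[n π, (n + 1) π]`.
theorem integral_cos_int_mul_cosBlock (hL : L ≠ 0) (n : ℤ) {d : ℤ} (hd : d ≠ 0) :
    ∫ x in (2 * n - 1) * L..(2 * n + 1) * L, cos (d * π * (x + L) / (2 * L)) = 0 := by
  have hc : d * π / (2 * L) ≠ 0 := by positivity
  have hsub : ∀ x, d * π * (x + L) / (2 * L) = d * π / (2 * L) * x + d * π / (2 * L) * L :=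
    fun x => by ring
  simp_rw [hsub]
  rw [intervalIntegral.integral_comp_mul_add (fun x => cos x) hc, integral_cos]
  have hlo : d * π / (2 * L) * ((2 * n - 1) * L) + d * π / (2 * L) * L = (d * n : ℤ) * π := by
    push_cast; field_simp; ring
  have hhi : d * π / (2 * L) * ((2 * n + 1) * L) + d * π / (2 * L) * L =
      (d * (n + 1) : ℤ) * π := by
    push_cast; field_simp; ring
  rw [hlo, hhi, sin_int_mul_pi, sin_int_mul_pi, sub_zero, smul_zero]

theorem setIntegral_cosMode_mul_cosMode_eq_zero (hL : 0 < L) (n : ℤ) {k l : ℕ} (hkl : k ≠ l) :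
    ∫ x in cosBlock L n, cosMode L k x * cosMode L l x = 0 := by
  have hprod : ∀ x, cosMode L k x * cosMode L l x =
      (cos (((k - l : ℤ) : ℝ) * π * (x + L) / (2 * L)) +
        cos (((k + l : ℤ) : ℝ) * π * (x + L) / (2 * L))) / 2 := by
    intro x
    have hsub : ((k - l : ℤ) : ℝ) * π * (x + L) / (2 * L) =
        k * π * (x + L) / (2 * L) - l * π * (x + L) / (2 * L) := by push_cast; ring
    have hadd : ((k + l : ℤ) : ℝ) * π * (x + L) / (2 * L) =
        k * π * (x + L) / (2 * L) + l * π * (x + L) / (2 * L) := by push_cast; ring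
    rw [hsub, hadd, cos_sub, cos_add, cosMode, cosMode]
    ring
  have hcont : ∀ d : ℤ, Continuous fun x : ℝ => cos (d * π * (x + L) / (2 * L)) := by
    intro d; fun_prop
  have hle : (2 * n - 1) * L ≤ (2 * n + 1) * L := by gcongr; linarith
  rw [cosBlock, ← intervalIntegral.integral_of_le hle]
  simp_rw [hprod]
  rw [intervalIntegral.integral_div,
    intervalIntegral.integral_add ((hcont _).intervalIntegrable _ _)
      ((hcont _).intervalIntegrable _ _), integral_cos_int_mul_cosBlock hL.ne' n (by omega),
    integral_cos_int_mul_cosBlock hL.ne' n (by omega)]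
  norm_num

theorem cosBlock_eq_Ioc_zsmul (L : ℝ) (n : ℤ) :
    cosBlock L n = Ioc (-L + n • (2 * L)) (-L + (n + 1) • (2 * L)) := by
  simp only [cosBlock, zsmul_eq_mul]
  push_cast
  ring_nf

theorem iUnion_cosBlock (hL : 0 < L) : ⋃ n, cosBlock L n = univ := by
  simp_rw [cosBlock_eq_Ioc_zsmul]
  exact iUnion_Ioc_add_zsmul (by positivity) _

theorem pairwise_disjoint_cosBlock (L : ℝ) :
    Pairwise (Function.onFun Disjoint (cosBlock L)) := by
  simp_rw [funext (cosBlock_eq_Ioc_zsmul L)]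
  exact pairwise_disjoint_Ioc_add_zsmul _ _

theorem volume_real_cosBlock (hL : 0 < L) (n : ℤ) : volume.real (cosBlock L n) = 2 * L := by
  rw [cosBlock, Real.volume_real_Ioc_of_le (by gcongr; linarith)]
  ring

theorem abs_le_of_mem_cosBlock_zero {x : ℝ} (hx : x ∈ cosBlock L 0) : |x| ≤ L := by
  simp only [cosBlock, Int.cast_zero, mul_zero, zero_sub, zero_add, neg_mul, one_mul,
    mem_Ioc] at hx
  exact abs_le.2 ⟨hx.1.le, hx.2⟩

theorem abs_int_mul_le_abs_of_mem_cosBlock {n : ℤ} {x : ℝ} (hx : x ∈ cosBlock L n)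
    (hLx : L < |x|) : |(n : ℝ)| * L ≤ |x| := by
  obtain ⟨hlo, hhi⟩ := hx
  have hdist : |2 * n * L - x| ≤ L := abs_le.2 ⟨by linarith, by linarith⟩
  have : 2 * (|(n : ℝ)| * L) ≤ |x| + L := by
    calc 2 * (|(n : ℝ)| * L) = |2 * n * L| := by
          rw [abs_mul, abs_mul, abs_two, abs_of_pos (by linarith : 0 < L)]; ring
      _ ≤ |x| + L := by linarith [abs_sub_abs_le_abs_sub (2 * n * L) x]
  linarith

section WeightedCauchySchwarz

variable {ι κ : Type*}

theorem sq_le_tsum_mul_tsum_of_hasSum {b w a : ι → ℝ} {c : ℝ} (hbc : HasSum b c)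
    (hw : ∀ i, 0 ≤ w i) (ha : ∀ i, 0 ≤ a i) (hba : ∀ i, b i ^ 2 ≤ w i * a i)
    (hws : Summable w) (has : Summable a) : c ^ 2 ≤ (∑' i, w i) * ∑' i, a i := by
  refine le_of_tendsto' (hbc.pow 2) fun t => ?_
  calc (∑ i ∈ t, b i) ^ 2 ≤ (∑ i ∈ t, w i) * ∑ i ∈ t, a i :=
        Finset.sum_sq_le_sum_mul_sum_of_sq_le_mul t (fun i _ => hw i) (fun i _ => ha i)
          (fun i _ => hba i)
    _ ≤ (∑' i, w i) * ∑' i, a i :=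
        mul_le_mul (hws.sum_le_tsum t fun i _ => hw i) (has.sum_le_tsum t fun i _ => ha i)
          (Finset.sum_nonneg fun i _ => ha i) (tsum_nonneg hw)

theorem sum_sq_le_tsum_mul_tsum_of_hasSum {b : ι → κ → ℝ} {c : κ → ℝ} {w : ι → ℝ}
    {a : ι → κ → ℝ} {A : ι → ℝ} (hbc : ∀ k, HasSum (b · k) (c k)) (hw : ∀ i, 0 ≤ w i)
    (ha : ∀ i k, 0 ≤ a i k) (hba : ∀ i k, b i k ^ 2 ≤ w i * a i k)
    (haA : ∀ i t, ∑ k ∈ t, a i k ≤ A i) (hws : Summable w) (hAs : Summable A)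
    (t : Finset κ) : ∑ k ∈ t, c k ^ 2 ≤ (∑' i, w i) * ∑' i, A i := by
  have has : ∀ k, Summable (a · k) := fun k =>
    hAs.of_nonneg_of_le (ha · k) fun i => by simpa using haA i {k}
  calc ∑ k ∈ t, c k ^ 2 ≤ ∑ k ∈ t, (∑' i, w i) * ∑' i, a i k :=
        Finset.sum_le_sum fun k _ =>
          sq_le_tsum_mul_tsum_of_hasSum (hbc k) hw (ha · k) (hba · k) hws (has k)
    _ = (∑' i, w i) * ∑' i, ∑ k ∈ t, a i k := by
        rw [← Finset.mul_sum, Summable.tsum_finsetSum fun k _ => has k]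
    _ ≤ (∑' i, w i) * ∑' i, A i :=
        mul_le_mul_of_nonneg_left
          (Summable.tsum_le_tsum (haA · t) (summable_sum fun k _ => has k) hAs) (tsum_nonneg hw)

end WeightedCauchySchwarz

theorem tsum_abs_int_rpow_neg {s : ℝ} (hs : 1 < s) :
    ∑' n : ℤ, |(n : ℝ)| ^ (-s) = 2 * ∑' j : ℕ, ((j : ℝ) + 1) ^ (-s) := by
  set Z := ∑' j : ℕ, ((j : ℝ) + 1) ^ (-s)
  have hsucc : HasSum (fun j : ℕ => ((j : ℝ) + 1) ^ (-s)) Z := by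
    refine Summable.hasSum ?_
    have := (summable_nat_add_iff 1).2 (Real.summable_nat_rpow.2 (by linarith : -s < -1))
    exact_mod_cast this
  have hpos : HasSum (fun j : ℕ => |((j : ℤ) : ℝ)| ^ (-s)) Z := by
    refine (hasSum_nat_add_iff' 1).1 ?_
    simp only [Finset.range_one, Finset.sum_singleton, Int.cast_natCast, Nat.cast_zero, abs_zero,
      Real.zero_rpow (by linarith : -s ≠ 0), sub_zero, Nat.cast_add, Nat.cast_one]
    refine hsucc.congr_fun fun j => ?_
    push_cast
    rw [abs_of_pos (by positivity)]
  have hneg : HasSum (fun j : ℕ => |((-(j + 1 : ℤ) : ℤ) : ℝ)| ^ (-s)) Z := by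
    refine hsucc.congr_fun fun j => ?_
    push_cast
    rw [abs_neg, abs_of_pos (by positivity)]
  rw [(HasSum.of_nat_of_neg_add_one (f := fun n : ℤ => |(n : ℝ)| ^ (-s)) hpos hneg).tsum_eq,
    two_mul]

theorem hasSum_setIntegral_cosBlock (hL : 0 < L) {h : ℝ → ℝ} (hh : Integrable h) :
    HasSum (fun n => ∫ x in cosBlock L n, h x) (∫ x, h x) := by
  have := hasSum_integral_iUnion (s := cosBlock L) (fun n => measurableSet_Ioc)
    (pairwise_disjoint_cosBlock L) hh.integrableOn
  rwa [iUnion_cosBlock hL, setIntegral_univ] at this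

section TailEnergy

variable {s M : ℝ} {g : ℝ → ℝ}

theorem rpow_abs_int_mul_sum_sq_setIntegral_cosMode_le (hL : 0 < L) (hs : 0 ≤ s)
    (hgm : AEStronglyMeasurable g) (hg0 : ∀ x, 0 ≤ g x) (hgM : ∀ x, g x ≤ M)
    (hgL : ∀ x, |x| ≤ L → g x = 0) (hgs : Integrable fun x => |x| ^ s * g x) (n : ℤ)
    (t : Finset ℕ) :
    |(n : ℝ)| ^ s * ∑ k ∈ t, (∫ x in cosBlock L n, g x * cosMode L k x) ^ 2 ≤
      2 * L * M * L ^ (-s) * ∫ x in cosBlock L n, |x| ^ s * g x := by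
  have : IsFiniteMeasure (volume.restrict (cosBlock L n)) :=
    isFiniteMeasure_restrict.2 measure_Ioc_lt_top.ne
  have hg : MemLp g 2 (volume.restrict (cosBlock L n)) :=
    .of_bound hgm.restrict M (ae_of_all _ fun x => (Real.norm_of_nonneg (hg0 x)).trans_le (hgM x))
  have hbessel := sum_sq_integral_mul_le_of_orthogonal
    (fun k => (continuous_cosMode L k).aestronglyMeasurable) zero_le_one
    (fun k x => abs_cos_le_one _) (fun k l hkl => setIntegral_cosMode_mul_cosMode_eq_zero hL n hkl)
    hg t
  rw [measureReal_restrict_apply_univ, volume_real_cosBlock hL, one_pow, one_mul] at hbessel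
  have hpt : ∀ x ∈ cosBlock L n, |(n : ℝ)| ^ s * g x ^ 2 ≤ M * L ^ (-s) * (|x| ^ s * g x) := by
    intro x hx
    rcases le_or_gt |x| L with hxL | hxL
    · simp [hgL x hxL]
    have hnx : |(n : ℝ)| ^ s ≤ L ^ (-s) * |x| ^ s := by
      rw [rpow_neg hL.le, inv_mul_eq_div, le_div_iff₀ (rpow_pos_of_pos hL s),
        ← mul_rpow (abs_nonneg _) hL.le]
      exact rpow_le_rpow (by positivity) (abs_int_mul_le_abs_of_mem_cosBlock hx hxL) hs
    calc |(n : ℝ)| ^ s * g x ^ 2 ≤ L ^ (-s) * |x| ^ s * (M * g x) := by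
          rw [sq]
          exact mul_le_mul hnx (mul_le_mul_of_nonneg_right (hgM x) (hg0 x))
            (mul_nonneg (hg0 x) (hg0 x)) (by positivity)
      _ = M * L ^ (-s) * (|x| ^ s * g x) := by ring
  calc |(n : ℝ)| ^ s * ∑ k ∈ t, (∫ x in cosBlock L n, g x * cosMode L k x) ^ 2
      ≤ |(n : ℝ)| ^ s * (2 * L * ∫ x in cosBlock L n, g x ^ 2) := by gcongr
    _ = 2 * L * ∫ x in cosBlock L n, |(n : ℝ)| ^ s * g x ^ 2 := by
        rw [integral_const_mul]; ring
    _ ≤ 2 * L * ∫ x in cosBlock L n, M * L ^ (-s) * (|x| ^ s * g x) :=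
        mul_le_mul_of_nonneg_left (setIntegral_mono_on (hg.integrable_sq.const_mul _)
          (hgs.integrableOn.const_mul _) measurableSet_Ioc hpt) (by positivity)
    _ = 2 * L * M * L ^ (-s) * ∫ x in cosBlock L n, |x| ^ s * g x := by
        rw [integral_const_mul]; ring

theorem sum_sq_integral_mul_cosMode_le (hL : 0 < L) (hs : 1 < s) (hg0 : ∀ x, 0 ≤ g x)
    (hgM : ∀ x, g x ≤ M) (hgL : ∀ x, |x| ≤ L → g x = 0) (hg : Integrable g)
    (hgs : Integrable fun x => |x| ^ s * g x) (t : Finset ℕ) :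
    ∑ k ∈ t, (∫ x, g x * cosMode L k x) ^ 2 ≤
      2 * (∑' j : ℕ, ((j : ℝ) + 1) ^ (-s)) * (2 * L * M * L ^ (-s) * ∫ x, |x| ^ s * g x) := by
  have hgφ : ∀ k, Integrable fun x => g x * cosMode L k x := fun k =>
    hg.mul_bdd (continuous_cosMode L k).aestronglyMeasurable
      (ae_of_all _ fun x => (Real.norm_eq_abs _).trans_le (abs_cos_le_one _))
  have hblock0 : ∀ k, ∫ x in cosBlock L 0, g x * cosMode L k x = 0 := fun k =>
    setIntegral_eq_zero_of_forall_eq_zero fun x hx => by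
      rw [hgL x (abs_le_of_mem_cosBlock_zero hx), zero_mul]
  -- Since `|0| ^ (-s) = 0` in Lean, block `0` (where `g` vanishes) gets weight zero.
  have hweight : ∀ (n : ℤ) (k : ℕ), (∫ x in cosBlock L n, g x * cosMode L k x) ^ 2 ≤
      |(n : ℝ)| ^ (-s) * (|(n : ℝ)| ^ s * (∫ x in cosBlock L n, g x * cosMode L k x) ^ 2) := by
    intro n k
    rcases eq_or_ne n 0 with rfl | hn
    · simp [hblock0]
    · rw [← mul_assoc, ← rpow_add (abs_pos.2 (Int.cast_ne_zero.2 hn)), neg_add_cancel, rpow_zero,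
        one_mul]
  have := sum_sq_le_tsum_mul_tsum_of_hasSum (fun k => hasSum_setIntegral_cosBlock hL (hgφ k))
    (fun n => rpow_nonneg (abs_nonneg _) _) (fun n k => by positivity) hweight
    (fun n t => by
      rw [← Finset.mul_sum]
      exact rpow_abs_int_mul_sum_sq_setIntegral_cosMode_le hL (by linarith)
        hg.aestronglyMeasurable hg0 hgM hgL hgs n t)
    (Real.summable_abs_int_rpow hs) ((hasSum_setIntegral_cosBlock hL hgs).summable.mul_left _) t
  rwa [tsum_abs_int_rpow_neg hs, tsum_mul_left, (hasSum_setIntegral_cosBlock hL hgs).tsum_eq]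
    at this

end TailEnergy

theorem tsum_sq_setIntegral_cosMode_le (hL : 0 < L) {s M : ℝ} (hs : 1 < s) {f : ℝ → ℝ}
    (hf0 : ∀ x, 0 ≤ f x) (hfM : ∀ x, f x ≤ M) (hf : Integrable f)
    (hfs : Integrable fun x => |x| ^ s * f x) :
    ∑' k : ℕ, 1 / L * (∫ x in {x : ℝ | L < |x|}, f x * cosMode L k x) ^ 2 ≤
      4 * (∑' j : ℕ, ((j : ℝ) + 1) ^ (-s)) * M * (∫ x, |x| ^ s * f x) * L ^ (-s) := by
  set T := {x : ℝ | L < |x|}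
  have hT : MeasurableSet T := measurableSet_lt measurable_const measurable_abs
  have hM : 0 ≤ M := (hf0 0).trans (hfM 0)
  have hZ : 0 ≤ ∑' j : ℕ, ((j : ℝ) + 1) ^ (-s) := tsum_nonneg fun j => by positivity
  have hcoef : ∀ k, ∫ x in T, f x * cosMode L k x = ∫ x, T.indicator f x * cosMode L k x :=
    fun k => by
      rw [← integral_indicator hT]
      exact integral_congr_ae (.of_forall fun x => indicator_mul_left _ _ _)
  have hTs : (fun x => |x| ^ s * T.indicator f x) = T.indicator fun x => |x| ^ s * f x :=
    funext fun x => (indicator_mul_right T (fun x => |x| ^ s) f).symm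
  have hmom : ∫ x, |x| ^ s * T.indicator f x ≤ ∫ x, |x| ^ s * f x := by
    rw [hTs]
    exact integral_mono (hfs.indicator hT) hfs
      (indicator_le_self' fun x _ => mul_nonneg (by positivity) (hf0 x))
  have hmom0 : 0 ≤ ∫ x, |x| ^ s * f x :=
    integral_nonneg fun x => mul_nonneg (by positivity) (hf0 x)
  refine tsum_le_of_sum_le' (by positivity) fun t => ?_
  have htail := sum_sq_integral_mul_cosMode_le hL hs (g := T.indicator f) (M := M)
    (fun x => indicator_nonneg (fun x _ => hf0 x) x)
    (fun x => (indicator_le_self' (fun x _ => hf0 x) x).trans (hfM x))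
    (fun x hx => indicator_of_notMem (s := T) (not_lt.2 hx) f) (hf.indicator hT)
    (hTs ▸ hfs.indicator hT) t
  rw [← Finset.mul_sum]
  simp_rw [hcoef]
  calc 1 / L * ∑ k ∈ t, (∫ x, T.indicator f x * cosMode L k x) ^ 2
      ≤ 1 / L * (2 * (∑' j : ℕ, ((j : ℝ) + 1) ^ (-s)) *
          (2 * L * M * L ^ (-s) * ∫ x, |x| ^ s * f x)) := by
        gcongr
        exact htail.trans (by gcongr)
    _ = 4 * (∑' j : ℕ, ((j : ℝ) + 1) ^ (-s)) * M * (∫ x, |x| ^ s * f x) * L ^ (-s) := by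
        field_simp
        ring

theorem bounded_density_cos_admissible_general
    (f : ℝ → ℝ) (M m ε : ℝ) (hε : 0 < ε)
    (hf0 : ∀ x, 0 ≤ f x) (hfM : ∀ x, f x ≤ M)
    (hf1 : Integrable f)
    (hmom : Integrable (fun x : ℝ => |x| ^ (1 + ε) * f x))
    (hm : ∫ x : ℝ, |x| ^ (1 + ε) * f x = m)
    (B : ℝ → ℝ)
    (hB : ∀ L : ℝ, B L = ∑' k : ℕ, (1 / L) *
        (∫ x in {x : ℝ | L < |x|},
          f x * Real.cos (k * Real.pi * (x + L) / (2 * L))) ^ 2) :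
    (∀ L : ℝ, 0 < L →
        B L ≤ 4 * (∑' j : ℕ, ((j : ℝ) + 1) ^ (-(1 + ε))) * M * m * L ^ (-(1 + ε)))
    ∧ Tendsto B atTop (nhds 0) := by
  have hbound : ∀ L : ℝ, 0 < L →
      B L ≤ 4 * (∑' j : ℕ, ((j : ℝ) + 1) ^ (-(1 + ε))) * M * m * L ^ (-(1 + ε)) := by
    intro L hL
    rw [hB L, ← hm]
    exact tsum_sq_setIntegral_cosMode_le hL (by linarith) hf0 hfM hf1 hmom
  have hlim : Tendsto
      (fun L : ℝ => 4 * (∑' j : ℕ, ((j : ℝ) + 1) ^ (-(1 + ε))) * M * m * L ^ (-(1 + ε)))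
      atTop (nhds 0) := by
    simpa only [mul_zero] using (tendsto_rpow_neg_atTop (by linarith : 0 < 1 + ε)).const_mul
      (4 * (∑' j : ℕ, ((j : ℝ) + 1) ^ (-(1 + ε))) * M * m)
  refine ⟨hbound, tendsto_of_tendsto_of_tendsto_of_le_of_le' tendsto_const_nhds hlim ?_ ?_⟩
  · filter_upwards [eventually_gt_atTop 0] with L hL
    rw [hB L]
    exact tsum_nonneg fun k => by positivity
  · filter_upwards [eventually_gt_atTop 0] with L hL using hbound L hL

theorem bounded_density_cos_admissible
    (f : ℝ → ℝ) (M m ε : ℝ) (hM : 0 < M) (hε : 0 < ε)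
    (hfmeas : Measurable f) (hf0 : ∀ x, 0 ≤ f x) (hfM : ∀ x, f x ≤ M)
    (hf1 : Integrable f) (hprob : ∫ x : ℝ, f x = 1)
    (hmom : Integrable (fun x : ℝ => |x| ^ (1 + ε) * f x))
    (hm : ∫ x : ℝ, |x| ^ (1 + ε) * f x = m)
    (B : ℝ → ℝ)
    (hB : ∀ L : ℝ, B L = ∑' k : ℕ, (1 / L) *
        (∫ x in {x : ℝ | L < |x|},
          f x * Real.cos (k * Real.pi * (x + L) / (2 * L))) ^ 2) :
    (∀ L : ℝ, 0 < L →
        B L ≤ 4 * (∑' j : ℕ, ((j : ℝ) + 1) ^ (-(1 + ε))) * M * m * L ^ (-(1 + ε)))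
    ∧ Tendsto B atTop (nhds 0) :=
  bounded_density_cos_admissible_general f M m ε hε hf0 hfM hf1 hmom hm B hB
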